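/- Let g be an invertible symmetric n×n real matrix with inverse g^{μν} and let π ∈ ℝⁿ be a covector with raised components π^μ = g^{μσ} π_σ. Define Q*_{μνρ} = −π_μ g_{νρ} + (1/2)(g_{μν} π_ρ + g_{μρ} π_ν) and T*_{ρμν} = (3/2)(π_ν g_{μρ} − π_μ g_{νρ}) (the non-metricity and torsion of the dual Schrödinger connection). Then the distortion tensor N*^μ_{νρ} := (1/2) g^{λμ}(−Q*_{λνρ} + Q*_{ρλν} + Q*_{νρλ}) − (1/2) g^{λμ}(T*_{ρνλ} + T*_{νρλ} − T*_{λρν}) equals −(1/2) π^μ g_{νρ} − (1/2) π_ρ δ^μ_ν + π_ν δ^μ_ρ for all indices μ, ν, ρ. -/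
import Mathlib


open scoped BigOperators

/-- Non-metricity of the dual Schrödinger connection:
`Q*_{μνρ} = −π_μ g_{νρ} + (1/2)(g_{μν} π_ρ + g_{μρ} π_ν)`. -/
noncomputable def dualQ {n : ℕ} (g : Matrix (Fin n) (Fin n) ℝ) (π : Fin n → ℝ)
    (μ ν ρ : Fin n) : ℝ :=
  -(π μ) * g ν ρ + (1/2) * (g μ ν * π ρ + g μ ρ * π ν)

/-- Lowered torsion of the dual Schrödinger connection:
`T*_{ρμν} = (3/2)(π_ν g_{μρ} − π_μ g_{νρ})`. -/
noncomputable def dualT {n : ℕ} (g : Matrix (Fin n) (Fin n) ℝ) (π : Fin n → ℝ)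
    (ρ μ ν : Fin n) : ℝ :=
  (3/2) * (π ν * g μ ρ - π μ * g ν ρ)

/-- The distortion tensor built from the non-metricity and torsion of the
dual Schrödinger connection equals `−(1/2) π^μ g_{νρ} − (1/2) π_ρ δ^μ_ν + π_ν δ^μ_ρ`. -/
theorem dual_schrodinger_distortion {n : ℕ}
    (g : Matrix (Fin n) (Fin n) ℝ) (hsymm : g.IsSymm) (hinv : IsUnit g.det)
    (π : Fin n → ℝ) :
    ∀ μ ν ρ : Fin n,
      (1/2 : ℝ) * (∑ l, g⁻¹ l μ *
          (-(dualQ g π l ν ρ) + dualQ g π ρ l ν + dualQ g π ν ρ l))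
        - (1/2 : ℝ) * (∑ l, g⁻¹ l μ *
          (dualT g π ρ ν l + dualT g π ν ρ l - dualT g π l ρ ν))
        = -(1/2) * (∑ σ, g⁻¹ μ σ * π σ) * g ν ρ
          - (1/2) * π ρ * (if μ = ν then 1 else 0)
          + π ν * (if μ = ρ then 1 else 0) := by
  intro μ ν ρ
  have hg : ∀ a b, g a b = g b a := fun a b => hsymm.apply b a
  have hgi : (g⁻¹).IsSymm := by
    rw [Matrix.IsSymm, Matrix.transpose_nonsing_inv, hsymm]
  have hgi' : ∀ a b, g⁻¹ a b = g⁻¹ b a := fun a b => hgi.apply b a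
  have hmul : g * g⁻¹ = 1 := Matrix.mul_nonsing_inv g hinv
  have h1 : ∑ l, g⁻¹ l μ * g l ν = if μ = ν then 1 else 0 := by
    have := congrArg (fun M => M ν μ) hmul
    simp [Matrix.mul_apply, Matrix.one_apply] at this
    calc ∑ l, g⁻¹ l μ * g l ν = ∑ l, g ν l * g⁻¹ l μ := by
          exact Finset.sum_congr rfl fun l _ => by rw [hg l ν]; ring
      _ = _ := by rw [this]; by_cases h : μ = ν <;> simp [h, eq_comm]
  have h2 : ∑ l, g⁻¹ l μ * g ρ l = if μ = ρ then 1 else 0 := by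
    have := congrArg (fun M => M ρ μ) hmul
    simp [Matrix.mul_apply, Matrix.one_apply] at this
    calc ∑ l, g⁻¹ l μ * g ρ l = ∑ l, g ρ l * g⁻¹ l μ := by
          exact Finset.sum_congr rfl fun l _ => by ring
      _ = _ := by rw [this]; by_cases h : μ = ρ <;> simp [h, eq_comm]
  have h3 : ∑ l, g⁻¹ l μ * π l = ∑ σ, g⁻¹ μ σ * π σ :=
    Finset.sum_congr rfl fun l _ => by rw [hgi' l μ]
  have hstep : (1/2 : ℝ) * (∑ l, g⁻¹ l μ *
          (-(dualQ g π l ν ρ) + dualQ g π ρ l ν + dualQ g π ν ρ l))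
        - (1/2 : ℝ) * (∑ l, g⁻¹ l μ *
          (dualT g π ρ ν l + dualT g π ν ρ l - dualT g π l ρ ν))
      = ∑ l, (-(1/2) * g ν ρ * (g⁻¹ l μ * π l)
          - (1/2) * π ρ * (g⁻¹ l μ * g l ν)
          + π ν * (g⁻¹ l μ * g ρ l)) := by
    rw [Finset.mul_sum, Finset.mul_sum, ← Finset.sum_sub_distrib]
    refine Finset.sum_congr rfl fun l _ => ?_
    simp only [dualQ, dualT]
    rw [hg ρ l, hg ν l, hg ρ ν]
    ring
  rw [hstep]
  simp only [Finset.sum_add_distrib, Finset.sum_sub_distrib, ← Finset.mul_sum]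
  rw [h1, h2, h3]
  ring
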